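/- arXiv:2303.17191 — 7 statements merged into one kernel-verified Lean document; each statement's English description precedes it below -/
import Mathlib

section
/- Every element of the group G generated by the transposition f = (ĥ0, č0) and the shift σ on X = (ℤ∪{∞})×{0,1} can be written in the form σ^a ∘ f_{b_k} ∘ ⋯ ∘ f_{b_1} with a ∈ ℤ and b_1 < b_2 < ⋯ < b_k ∈ ℤ, where f_n = σ^{-n} ∘ f ∘ σ^n. -/
open Filter Topology

noncomputable section

/-- The shift `s ↦ s - 1` on the one-point compactification `ℤ ∪ {∞}`, fixing `∞`. -/
def shiftOP : Equiv.Perm (OnePoint ℤ) :=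
  (Equiv.optionCongr (Equiv.subRight (1 : ℤ)) : Equiv.Perm (Option ℤ))

/-- The phase space `X = (ℤ ∪ {∞}) × {0,1}`. -/
abbrev LampX : Type := OnePoint ℤ × Bool

/-- The transposition `f` swapping `(0,1)` and `(0,0)`. -/
def lampF : Equiv.Perm LampX :=
  haveI : DecidableEq LampX := Classical.decEq _
  Equiv.swap (((0 : ℤ) : OnePoint ℤ), true) (((0 : ℤ) : OnePoint ℤ), false)

/-- The shift `σ` on `X`, decrementing the integer coordinate. -/
def lampSigma : Equiv.Perm LampX := (shiftOP).prodCongr (Equiv.refl Bool)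

/-- `f_n = σ^{-n} ∘ f ∘ σ^n`. -/
def lampfn (n : ℤ) : Equiv.Perm LampX := lampSigma ^ (-n) * lampF * lampSigma ^ n

/-- The Lamplighter group `G = ⟨f, σ⟩`. -/
def lampG : Subgroup (Equiv.Perm LampX) := Subgroup.closure {lampF, lampSigma}

/-- For `l = [b_1, …, b_k]`, the composition `f_{b_k} ∘ ⋯ ∘ f_{b_1}`. -/
def lampProd (l : List ℤ) : Equiv.Perm LampX := (l.reverse.map lampfn).prod

/-! The permutation `f_n` toggles the lamp over `n`, i.e. flips the `Bool` coordinate above the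
point `n`. Toggling over `S` and then over `T` is toggling over the symmetric difference `S ∆ T`,
and conjugating a toggle by `σ^a` shifts its support by `a`. Hence the permutations `σ^a ∘ toggle S`
with `S ⊆ ℤ` finite form a subgroup; it contains `f = toggle {0}` and `σ`, so it contains `G`, and
listing `S` in increasing order gives the normal form. -/

namespace Equiv.Perm

variable {α : Type*}

open Classical in
def toggle (S : Set α) : Perm (α × Bool) :=
  Function.Involutive.toPerm (fun x => if x.1 ∈ S then (x.1, !x.2) else x) fun x => by
    by_cases h : x.1 ∈ S <;> simp [h]

open Classical in
theorem toggle_apply (S : Set α) (x : α × Bool) :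
    toggle S x = if x.1 ∈ S then (x.1, !x.2) else x :=
  rfl

@[simp]
theorem toggle_empty : toggle (∅ : Set α) = 1 := by
  ext x : 1
  simp [toggle_apply]

theorem toggle_symmDiff (S T : Set α) : toggle (symmDiff S T) = toggle S * toggle T := by
  ext ⟨p, b⟩ : 1
  by_cases hS : p ∈ S <;> by_cases hT : p ∈ T <;> simp [toggle_apply, Set.mem_symmDiff, hS, hT]

theorem toggle_inv (S : Set α) : (toggle S)⁻¹ = toggle S := by
  rw [inv_eq_iff_mul_eq_one, ← toggle_symmDiff, symmDiff_self, Set.bot_eq_empty, toggle_empty]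

theorem swap_eq_toggle_singleton [DecidableEq (α × Bool)] (p : α) :
    swap (p, true) (p, false) = toggle {p} := by
  ext ⟨q, b⟩ : 1
  by_cases hq : q = p
  · subst hq
    cases b <;> simp [toggle_apply]
  · rw [swap_apply_of_ne_of_ne (by simp [hq]) (by simp [hq])]
    simp [toggle_apply, hq]

theorem toggle_mul_eq_mul_toggle_preimage (S : Set α) {g : Perm (α × Bool)} {e : α → α}
    (hg : ∀ x, g x = (e x.1, x.2)) : toggle S * g = g * toggle (e ⁻¹' S) := by
  ext ⟨p, b⟩ : 1
  by_cases h : e p ∈ S <;> simp [toggle_apply, hg, h]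

end Equiv.Perm

theorem OnePoint.preimage_map_image_coe {X Y : Type*} (f : X → Y) (S : Set Y) :
    OnePoint.map f ⁻¹' ((↑) '' S) = (↑) '' (f ⁻¹' S) := by
  ext p
  induction p using OnePoint.rec <;> simp

open Equiv.Perm

theorem lampSigma_zpow_apply (a : ℤ) (x : LampX) :
    (lampSigma ^ a) x = (x.1.map (· - a), x.2) := by
  let φ : Equiv.Perm ℤ →* Equiv.Perm LampX :=
    MonoidHom.mk' (fun e => (Equiv.optionCongr e).prodCongr (Equiv.refl Bool))
      fun _ _ => Equiv.ext fun ⟨p, _⟩ => by cases p <;> rfl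
  have hσ : lampSigma = φ (Equiv.addRight (-1)) := rfl
  rw [hσ, ← map_zpow, Equiv.zsmul_addRight]
  obtain ⟨_ | n, b⟩ := x
  · rfl
  · change (((n + a • -1 : ℤ) : OnePoint ℤ), b) = (((n - a : ℤ) : OnePoint ℤ), b)
    simp [sub_eq_add_neg]

def lampToggle (S : Set ℤ) : Equiv.Perm LampX := toggle ((↑) '' S)

theorem lampToggle_symmDiff (S T : Set ℤ) :
    lampToggle (symmDiff S T) = lampToggle S * lampToggle T := by
  rw [lampToggle, Set.image_symmDiff OnePoint.coe_injective, toggle_symmDiff]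
  rfl

theorem lampToggle_mul_lampSigma_zpow (S : Set ℤ) (a : ℤ) :
    lampToggle S * lampSigma ^ a = lampSigma ^ a * lampToggle ((· - a) ⁻¹' S) := by
  rw [lampToggle, lampToggle, toggle_mul_eq_mul_toggle_preimage _ (lampSigma_zpow_apply a),
    OnePoint.preimage_map_image_coe]

theorem lampfn_eq_lampToggle (n : ℤ) : lampfn n = lampToggle {n} := by
  have hF : lampF = lampToggle {0} := by
    rw [lampToggle, Set.image_singleton]
    exact @swap_eq_toggle_singleton _ (Classical.decEq _) _
  rw [lampfn, hF, mul_assoc, lampToggle_mul_lampSigma_zpow, ← mul_assoc, ← zpow_add,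
    neg_add_cancel, zpow_zero, one_mul]
  congr 1
  ext m
  simp [sub_eq_zero]

theorem lampProd_cons (n : ℤ) (l : List ℤ) : lampProd (n :: l) = lampProd l * lampfn n := by
  simp [lampProd]

theorem lampProd_eq_lampToggle {l : List ℤ} (hl : l.Nodup) :
    lampProd l = lampToggle {n | n ∈ l} := by
  induction l with
  | nil => simp [lampProd, lampToggle]
  | cons n l ih =>
    rw [List.nodup_cons] at hl
    have hsplit : {m | m ∈ n :: l} = symmDiff {m | m ∈ l} {n} := by
      ext m
      by_cases hm : m = n
      · subst hm
        simp [Set.mem_symmDiff, hl.1]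
      · simp [Set.mem_symmDiff, hm]
    rw [lampProd_cons, ih hl.2, lampfn_eq_lampToggle, hsplit, lampToggle_symmDiff]

def lampNormalForms : Subgroup (Equiv.Perm LampX) where
  carrier := {g | ∃ (a : ℤ) (S : Set ℤ), S.Finite ∧ g = lampSigma ^ a * lampToggle S}
  one_mem' := ⟨0, ∅, Set.finite_empty, by simp [lampToggle]⟩
  mul_mem' := by
    rintro _ _ ⟨a, S, hS, rfl⟩ ⟨b, T, hT, rfl⟩
    refine ⟨a + b, symmDiff ((· - b) ⁻¹' S) T,
      (hS.preimage sub_left_injective.injOn).symmDiff hT, ?_⟩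
    rw [lampToggle_symmDiff, zpow_add, mul_assoc, ← mul_assoc (lampToggle S),
      lampToggle_mul_lampSigma_zpow]
    group
  inv_mem' := by
    rintro _ ⟨a, S, hS, rfl⟩
    refine ⟨-a, (· - -a) ⁻¹' S, hS.preimage sub_left_injective.injOn, ?_⟩
    rw [mul_inv_rev, ← zpow_neg, lampToggle, toggle_inv, ← lampToggle,
      lampToggle_mul_lampSigma_zpow]

theorem lampG_le_lampNormalForms : lampG ≤ lampNormalForms := by
  refine (Subgroup.closure_le _).2 (Set.insert_subset ?_ (Set.singleton_subset_iff.2 ?_))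
  · refine ⟨0, {0}, Set.finite_singleton 0, ?_⟩
    rw [zpow_zero, one_mul, ← lampfn_eq_lampToggle, lampfn, neg_zero, zpow_zero, one_mul,
      mul_one]
  · exact ⟨1, ∅, Set.finite_empty, by simp [lampToggle]⟩

/-- Every element of the Lamplighter group `G = ⟨f, σ⟩` can be written in the form
`σ^a ∘ f_{b_k} ∘ ⋯ ∘ f_{b_1}` with `a ∈ ℤ` and `b_1 < ⋯ < b_k` in `ℤ`. -/
theorem lamplighter_normal_form_exists :
    ∀ g ∈ lampG, ∃ (a : ℤ) (l : List ℤ),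
      l.Pairwise (· < ·) ∧ g = lampSigma ^ a * lampProd l := by
  intro g hg
  obtain ⟨a, S, hS, rfl⟩ := lampG_le_lampNormalForms hg
  refine ⟨a, hS.toFinset.sort, (Finset.sortedLT_sort _).pairwise, ?_⟩
  rw [lampProd_eq_lampToggle (Finset.sort_nodup _ _)]
  congr
  ext n
  simp

end
end

section
/- If a topological group G admits a thin Følner sequence, then G is separable; in fact, if (F_n) is a thin Følner sequence then the countable set ⋃_{n∈ℕ} F_n F_n^{-1} is dense in G. -/
open Filter Topology Pointwise

noncomputable section

variable {G : Type*} [Group G] [TopologicalSpace G] [IsTopologicalGroup G] [DecidableEq G]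

/-- The `V`-matching number `𝔪_V(F,E)`: the maximal cardinality of a subset `M ⊆ F`
admitting an injection `φ : M → E` with `φ(x) ∈ Vx` for all `x ∈ M`. -/
def matchingNumber (V : Set G) (F E : Finset G) : ℕ :=
  sSup {k | ∃ M : Finset G, M ⊆ F ∧ M.card = k ∧ ∃ φ : G → G,
    Set.InjOn φ M ∧ ∀ x ∈ M, φ x ∈ E ∧ ∃ v ∈ V, φ x = v * x}

/-- A thin Følner sequence: finite non-empty subsets `F_n` with
`𝔪_V(F_n, gF_n)/|F_n| → 1` for every `g ∈ G` and every open neighbourhood `V` of the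
identity. -/
def IsThinFolner (F : ℕ → Finset G) : Prop :=
  (∀ n, (F n).Nonempty) ∧
  ∀ (g : G) (V : Set G), IsOpen V → (1 : G) ∈ V →
    Tendsto (fun n => (matchingNumber V (F n) ((F n).image (g * ·)) : ℝ) / (F n).card)
      atTop (𝓝 1)

/-!
Given a non-empty open set `W ∋ w`, put `V = w⁻¹W`. Since `𝔪_V(F_n, w⁻¹F_n)/|F_n| → 1`, some
matching number is positive, so some `x ∈ F_n` is matched to `v x = w⁻¹ y` with `v ∈ V`,
`y ∈ F_n`; then `y x⁻¹ = w v ∈ W`. Hence `⋃ₙ F_n F_n⁻¹`, a countable set, meets every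
non-empty open set.
-/

omit [TopologicalSpace G] [IsTopologicalGroup G] [DecidableEq G] in
theorem exists_mul_mem_of_matchingNumber_pos {V : Set G} {F E : Finset G}
    (h : 0 < matchingNumber V F E) : ∃ x ∈ F, ∃ v ∈ V, v * x ∈ E := by
  unfold matchingNumber at h
  obtain ⟨k, ⟨M, hMF, rfl, φ, -, hφ⟩, hk⟩ := exists_lt_of_lt_csSup
    (by exact ⟨0, ∅, Finset.empty_subset F, rfl, id, by simp, by simp⟩) h
  obtain ⟨x, hx⟩ := Finset.card_pos.mp hk
  obtain ⟨hφE, v, hv, hφv⟩ := hφ x hx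
  exact ⟨x, hMF hx, v, hv, hφv ▸ hφE⟩

omit [IsTopologicalGroup G] in
theorem IsThinFolner.eventually_matchingNumber_pos {F : ℕ → Finset G} (hF : IsThinFolner F)
    (g : G) {V : Set G} (hV : IsOpen V) (h1 : (1 : G) ∈ V) :
    ∀ᶠ n in atTop, 0 < matchingNumber V (F n) ((F n).image (g * ·)) :=
  ((hF.2 g V hV h1).eventually (eventually_gt_nhds one_pos)).mono fun n hn =>
    Nat.pos_of_ne_zero fun h0 => by rw [h0, Nat.cast_zero, zero_div] at hn; exact lt_irrefl 0 hn

theorem IsThinFolner.dense_iUnion_mul_inv {F : ℕ → Finset G} (hF : IsThinFolner F) :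
    Dense (⋃ n, ((F n : Set G) * (F n : Set G)⁻¹)) := by
  refine dense_iff_inter_open.mpr fun W hW ⟨w, hw⟩ => ?_
  have hV : IsOpen ((w * ·) ⁻¹' W) := hW.preimage (continuous_const_mul w)
  obtain ⟨n, hn⟩ := (hF.eventually_matchingNumber_pos w⁻¹ hV (by simpa using hw)).exists
  obtain ⟨x, hx, v, hv, hvx⟩ := exists_mul_mem_of_matchingNumber_pos hn
  obtain ⟨y, hy, hyx⟩ := Finset.mem_image.mp hvx
  have hy_eq : y * x⁻¹ = w * v := by
    rw [mul_inv_eq_iff_eq_mul, mul_assoc, ← hyx, mul_inv_cancel_left]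
  exact ⟨y * x⁻¹, hy_eq ▸ hv,
    Set.mem_iUnion.mpr ⟨n, Set.mul_mem_mul hy (Set.inv_mem_inv.mpr hx)⟩⟩

/-- If a topological group admits a thin Følner sequence `(F_n)`, then it is separable;
in fact the countable set `⋃_n F_n F_n⁻¹` is dense. -/
theorem separable_of_thinFolner (F : ℕ → Finset G) (hF : IsThinFolner F) :
    (⋃ n, ((F n : Set G) * (F n : Set G)⁻¹)).Countable ∧
    Dense (⋃ n, ((F n : Set G) * (F n : Set G)⁻¹)) ∧
    TopologicalSpace.SeparableSpace G := by
  have hcount : (⋃ n, ((F n : Set G) * (F n : Set G)⁻¹)).Countable :=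
    Set.countable_iUnion fun n => ((F n).finite_toSet.mul (F n).finite_toSet.inv).countable
  have hdense := hF.dense_iUnion_mul_inv
  exact ⟨hcount, hdense, ⟨⟨_, hcount, hdense⟩⟩⟩

end
end

section
/- Let 𝓕 = (F_n) be a left Følner sequence in G such that for every x ∈ X and f ∈ C(X) the averages S_n f(x) = (1/|F_n|) Σ_{g∈F_n} f(gx) converge to μ_x(f) for some Borel probability measure μ_x, with x ↦ μ_x continuous (weak*). Then the operator S : C(X) → C(X), Sf(x) = μ_x(f), is a well-defined bounded linear positive contractive projection: Sf ≥ 0 whenever f ≥ 0, S1 ≤ 1, and S² = S. -/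
open Filter Topology MeasureTheory
open scoped symmDiff

noncomputable section

variable {G : Type*} [Group G] [Countable G] [DecidableEq G]
variable {X : Type*} [MetricSpace X] [CompactSpace X]
  [MeasurableSpace X] [BorelSpace X] [MulAction G X]

/-- A left Følner sequence in a countable discrete group: a sequence of finite non-empty
subsets `F_n` with `|g F_n Δ F_n|/|F_n| → 0` for every `g ∈ G`. -/
def IsFolner (F : ℕ → Finset G) : Prop :=
  (∀ n, (F n).Nonempty) ∧
  ∀ g : G, Tendsto (fun n => ((((F n).image (g * ·)) ∆ (F n)).card : ℝ) / (F n).card)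
    atTop (𝓝 0)

/-- Bounding the difference of sums over two finite sets by the symmetric difference. -/
lemma sum_sub_sum_abs_le {α : Type*} [DecidableEq α] (A B : Finset α) (u : α → ℝ) (C : ℝ)
    (hC : ∀ a, |u a| ≤ C) :
    |∑ i ∈ A, u i - ∑ i ∈ B, u i| ≤ (A ∆ B).card * C := by
  have h1 : ∑ i ∈ A, u i - ∑ i ∈ B, u i = ∑ i ∈ A \ B, u i - ∑ i ∈ B \ A, u i := by
    rw [← Finset.sum_inter_add_sum_sdiff A B u, ← Finset.sum_inter_add_sum_sdiff B A u,
      Finset.inter_comm]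
    ring
  rw [h1, symmDiff_def, Finset.sup_eq_union]
  have hd : Disjoint (A \ B) (B \ A) := disjoint_sdiff_sdiff
  rw [Finset.card_union_of_disjoint hd]
  calc |∑ i ∈ A \ B, u i - ∑ i ∈ B \ A, u i|
      ≤ |∑ i ∈ A \ B, u i| + |∑ i ∈ B \ A, u i| := abs_sub _ _
    _ ≤ (A \ B).card * C + (B \ A).card * C := by
        gcongr <;> exact (Finset.abs_sum_le_sum_abs _ _).trans
          (by calc ∑ i ∈ _, |u i| ≤ ∑ _i ∈ _, C := Finset.sum_le_sum fun i _ => hC i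
                _ = _ := by rw [Finset.sum_const, nsmul_eq_mul])
    _ = _ := by push_cast; ring

/-- Suppose every `x ∈ X` is `μ_x`-generic along a left Følner sequence `𝓕` and
`x ↦ μ_x` is weak*-continuous.  Then the operator `S : C(X) → C(X)`, `Sf(x) = μ_x(f)`,
is a well-defined bounded linear positive contractive projection: `Sf` is continuous,
`‖Sf‖ ≤ ‖f‖`, `S` is linear, `Sf ≥ 0` whenever `f ≥ 0`, `S1 ≤ 1`, and `S² = S`. -/
theorem folner_average_operator_pos_contractive_projection
    (hcont : ∀ g : G, Continuous fun x : X => g • x)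
    (F : ℕ → Finset G) (hF : IsFolner F)
    (μ : X → ProbabilityMeasure X) (hμcont : Continuous μ)
    (hgen : ∀ x : X, ∀ f : C(X, ℝ),
      Tendsto (fun n => (∑ g ∈ F n, f (g • x)) / (F n).card)
        atTop (𝓝 (∫ y, f y ∂(μ x : Measure X)))) :
    (∀ f : C(X, ℝ), Continuous fun x => ∫ y, f y ∂(μ x : Measure X)) ∧
    (∀ f h : C(X, ℝ), ∀ c : ℝ, ∀ x : X,
      ∫ y, (c * f y + h y) ∂(μ x : Measure X)
        = c * ∫ y, f y ∂(μ x : Measure X) + ∫ y, h y ∂(μ x : Measure X)) ∧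
    (∀ f : C(X, ℝ), ∀ x : X, |∫ y, f y ∂(μ x : Measure X)| ≤ ‖f‖) ∧
    (∀ f : C(X, ℝ), (∀ y, 0 ≤ f y) → ∀ x : X, 0 ≤ ∫ y, f y ∂(μ x : Measure X)) ∧
    (∀ x : X, ∫ _y, (1 : ℝ) ∂(μ x : Measure X) ≤ 1) ∧
    (∀ f : C(X, ℝ), ∀ x : X,
      ∫ y, (∫ z, f z ∂(μ y : Measure X)) ∂(μ x : Measure X)
        = ∫ y, f y ∂(μ x : Measure X)) := by
  -- integrability of continuous functions against the probability measures
  have hInt : ∀ (f : X → ℝ), Continuous f → ∀ x : X, Integrable f (μ x : Measure X) :=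
    fun f hf x => hf.integrable_of_hasCompactSupport (HasCompactSupport.of_compactSpace f)
  -- continuity of the operator output
  have hScont : ∀ f : C(X, ℝ), Continuous fun x => ∫ y, f y ∂(μ x : Measure X) := fun f =>
    (ProbabilityMeasure.continuous_integral_boundedContinuousFunction
      (BoundedContinuousFunction.mkOfCompact f)).comp hμcont
  -- invariance of each μ_x
  have hinv : ∀ (f : C(X, ℝ)) (g : G) (x : X),
      ∫ y, f (g • y) ∂(μ x : Measure X) = ∫ y, f y ∂(μ x : Measure X) := by
    intro f g x
    set fg : C(X, ℝ) := f.comp ⟨fun y => g • y, hcont g⟩ with hfg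
    have h1 : Tendsto (fun n => (∑ h ∈ F n, f (g • (h • x))) / ((F n).card : ℝ))
        atTop (𝓝 (∫ y, f (g • y) ∂(μ x : Measure X))) := hgen x fg
    have h2 := hgen x f
    -- the difference of the two averages tends to 0
    have hdiff : Tendsto (fun n => (∑ h ∈ F n, f (g • (h • x))) / ((F n).card : ℝ)
        - (∑ h ∈ F n, f (h • x)) / ((F n).card : ℝ)) atTop (𝓝 0) := by
      refine squeeze_zero_norm (a := fun n =>
        ‖f‖ * (((((F n).image (g * ·)) ∆ (F n)).card : ℝ) / (F n).card)) (fun n => ?_) ?_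
      · have hcard : (0 : ℝ) < (F n).card := by
          exact_mod_cast (hF.1 n).card_pos
        have hre : ∑ h ∈ F n, f (g • (h • x)) = ∑ h ∈ (F n).image (g * ·), f (h • x) := by
          rw [Finset.sum_image (fun a _ b _ hab => mul_left_cancel hab)]
          simp [mul_smul]
        rw [Real.norm_eq_abs, div_sub_div_same, abs_div, abs_of_pos hcard, hre]
        calc |∑ h ∈ (F n).image (g * ·), f (h • x) - ∑ h ∈ F n, f (h • x)| / ((F n).card : ℝ)
            ≤ (((((F n).image (g * ·)) ∆ (F n)).card : ℝ) * ‖f‖) / (F n).card := by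
              gcongr
              exact sum_sub_sum_abs_le _ _ _ ‖f‖ fun a => f.norm_coe_le_norm (a • x)
          _ = ‖f‖ * (((((F n).image (g * ·)) ∆ (F n)).card : ℝ) / (F n).card) := by ring
      · have := (hF.2 g).const_mul ‖f‖
        simpa using this
    have h1' : Tendsto (fun n => (∑ h ∈ F n, f (h • x)) / ((F n).card : ℝ))
        atTop (𝓝 (∫ y, f (g • y) ∂(μ x : Measure X))) := by
      have := h1.sub hdiff
      simpa using this
    exact tendsto_nhds_unique h1' h2
  refine ⟨hScont, ?_, ?_, ?_, ?_, ?_⟩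
  · -- linearity
    intro f h c x
    rw [integral_add ((hInt f f.continuous x).const_mul c) (hInt h h.continuous x),
      integral_const_mul]
  · -- contraction
    intro f x
    rw [← Real.norm_eq_abs]
    calc ‖∫ y, f y ∂(μ x : Measure X)‖ ≤ ‖f‖ * ((μ x : Measure X) Set.univ).toReal :=
          norm_integral_le_of_norm_le_const
            (Filter.Eventually.of_forall fun y => f.norm_coe_le_norm y)
      _ = ‖f‖ := by simp
  · -- positivity
    intro f hf x
    exact integral_nonneg hf
  · -- S1 ≤ 1
    intro x
    simp
  · -- projection
    intro f x
    set c := ∫ y, f y ∂(μ x : Measure X) with hc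
    have hconv : Tendsto (fun n => ∫ y, (∑ g ∈ F n, f (g • y)) / ((F n).card : ℝ)
        ∂(μ x : Measure X)) atTop (𝓝 (∫ y, (∫ z, f z ∂(μ y : Measure X)) ∂(μ x : Measure X))) := by
      apply tendsto_integral_of_dominated_convergence (bound := fun _ => ‖f‖)
      · intro n
        exact (Continuous.aestronglyMeasurable (by
          exact (continuous_finset_sum _ fun g _ => f.continuous.comp (hcont g)).div_const _))
      · exact integrable_const _
      · intro n
        refine Filter.Eventually.of_forall fun y => ?_
        have hcard : (0 : ℝ) < (F n).card := by exact_mod_cast (hF.1 n).card_pos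
        rw [Real.norm_eq_abs, abs_div, abs_of_pos hcard, div_le_iff₀ hcard]
        calc |∑ g ∈ F n, f (g • y)| ≤ ∑ g ∈ F n, |f (g • y)| := Finset.abs_sum_le_sum_abs _ _
          _ ≤ ∑ _g ∈ F n, ‖f‖ := Finset.sum_le_sum fun g _ => f.norm_coe_le_norm (g • y)
          _ = ‖f‖ * (F n).card := by rw [Finset.sum_const, nsmul_eq_mul]; ring
      · exact Filter.Eventually.of_forall fun y => hgen y f
    have hconst : ∀ n, ∫ y, (∑ g ∈ F n, f (g • y)) / ((F n).card : ℝ) ∂(μ x : Measure X) = c := by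
      intro n
      have hcard : (0 : ℝ) < (F n).card := by exact_mod_cast (hF.1 n).card_pos
      rw [integral_div, integral_finset_sum _ (fun g _ =>
        hInt (fun y => f (g • y)) (f.continuous.comp (hcont g)) x)]
      have : ∀ g ∈ F n, ∫ y, f (g • y) ∂(μ x : Measure X) = c := fun g _ => hinv f g x
      rw [Finset.sum_congr rfl this, Finset.sum_const, nsmul_eq_mul]
      field_simp
    have : Tendsto (fun n => ∫ y, (∑ g ∈ F n, f (g • y)) / ((F n).card : ℝ)
        ∂(μ x : Measure X)) atTop (𝓝 c) := by
      simp only [hconst]; exact tendsto_const_nhds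
    exact tendsto_nhds_unique hconv this

end
end

section
/- With S as above (the pointwise limit of the Følner averaging operators, assumed to exist with Sf continuous for all f ∈ C(X)), the following are equivalent: (i) T_g S = S for all g ∈ G, where T_g f = f∘g; (ii) every orbit closure in X is uniquely ergodic. -/
/-!
Genericity along a Følner sequence makes each `μ x` invariant and concentrated on the orbit
closure of `x`, and by dominated convergence on the Følner averages, integrating `S f` against an
invariant measure `ν` gives back `∫ f ∂ν`. If `S f` is constant along orbits, continuity of
`x ↦ μ x` makes it constant on orbit closures, so an invariant `ν` living on the orbit closure of
`x` has `∫ f ∂ν = ∫ S f ∂ν = S f x`, i.e. `ν = μ x`. Conversely, `μ x` and `μ (g • x)` are both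
invariant and live on the same orbit closure, so unique ergodicity forces them to agree.
-/

open Filter Topology MeasureTheory
open scoped symmDiff

noncomputable section

variable {G : Type*} [Group G] [Countable G] [DecidableEq G]
variable {X : Type*} [MetricSpace X] [CompactSpace X]
  [MeasurableSpace X] [BorelSpace X] [MulAction G X]

open Finset

theorem Finset.abs_sum_sub_sum_le_card_symmDiff_mul {α : Type*} [DecidableEq α]
    (A B : Finset α) {φ : α → ℝ} {C : ℝ} (hC : ∀ a, |φ a| ≤ C) :
    |∑ a ∈ A, φ a - ∑ a ∈ B, φ a| ≤ #(A ∆ B) * C := by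
  rw [← sum_sdiff_sub_sum_sdiff]
  calc |∑ a ∈ A \ B, φ a - ∑ a ∈ B \ A, φ a|
      ≤ ∑ a ∈ A \ B, |φ a| + ∑ a ∈ B \ A, |φ a| :=
        (abs_sub _ _).trans (add_le_add (abs_sum_le_sum_abs _ _) (abs_sum_le_sum_abs _ _))
    _ = ∑ a ∈ A ∆ B, |φ a| := by
        rw [symmDiff_def, sup_eq_union, sum_union disjoint_sdiff_sdiff]
    _ ≤ #(A ∆ B) * C := by simpa using sum_le_card_nsmul _ _ C fun a _ => hC a

theorem Continuous.integrable_of_compactSpace {Y : Type*} [TopologicalSpace Y] [CompactSpace Y]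
    [MeasurableSpace Y] [OpensMeasurableSpace Y] {f : Y → ℝ} (hf : Continuous f)
    (ν : Measure Y) [IsFiniteMeasure ν] : Integrable f ν :=
  (BoundedContinuousFunction.mkOfCompact ⟨f, hf⟩).integrable ν

theorem map_eq_self_iff_forall_integral_comp_eq {Y : Type*} [TopologicalSpace Y]
    [MeasurableSpace Y] [BorelSpace Y] [HasOuterApproxClosed Y]
    {ν : Measure Y} [IsFiniteMeasure ν] {T : Y → Y} (hT : Continuous T) :
    ν.map T = ν ↔ ∀ f : C(Y, ℝ), ∫ y, f (T y) ∂ν = ∫ y, f y ∂ν := by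
  constructor
  · intro h f
    rw [← integral_map hT.aemeasurable f.continuous.aestronglyMeasurable, h]
  · intro h
    refine ext_of_forall_integral_eq_of_IsFiniteMeasure fun f => ?_
    rw [integral_map hT.aemeasurable f.continuous.aestronglyMeasurable]
    exact h f.toContinuousMap

theorem IsFolner.tendsto_average_mul_left_sub {Γ : Type*} [Group Γ] [DecidableEq Γ]
    {F : ℕ → Finset Γ} (hF : IsFolner F) {φ : Γ → ℝ} {C : ℝ} (hC : ∀ h, |φ h| ≤ C) (g : Γ) :
    Tendsto (fun n => (∑ h ∈ F n, φ (g * h)) / #(F n) - (∑ h ∈ F n, φ h) / #(F n))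
      atTop (𝓝 0) := by
  refine squeeze_zero_norm (a := fun n => (#((F n).image (g * ·) ∆ F n) : ℝ) / #(F n) * C)
    (fun n => ?_) (by simpa using (hF.2 g).mul_const C)
  have hcard : (0 : ℝ) < #(F n) := by exact_mod_cast (hF.1 n).card_pos
  have himage : ∑ h ∈ F n, φ (g * h) = ∑ h ∈ (F n).image (g * ·), φ h :=
    (sum_image fun a _ b _ hab => mul_left_cancel hab).symm
  rw [himage, div_sub_div_same, Real.norm_eq_abs, abs_div, abs_of_pos hcard, div_mul_eq_mul_div]
  gcongr
  exact abs_sum_sub_sum_le_card_symmDiff_mul _ _ hC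

section Generic

variable {Γ Y : Type*}

def folnerAverage [SMul Γ Y] (F : ℕ → Finset Γ) (f : Y → ℝ) (n : ℕ) (x : Y) : ℝ :=
  (∑ g ∈ F n, f (g • x)) / #(F n)

def IsGeneric [SMul Γ Y] [TopologicalSpace Y] [MeasurableSpace Y] (F : ℕ → Finset Γ) (x : Y)
    (ν : Measure Y) : Prop :=
  ∀ f : C(Y, ℝ), Tendsto (fun n => folnerAverage F f n x) atTop (𝓝 (∫ y, f y ∂ν))

theorem continuous_folnerAverage [SMul Γ Y] [TopologicalSpace Y] [ContinuousConstSMul Γ Y]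
    (F : ℕ → Finset Γ) {f : Y → ℝ} (hf : Continuous f) (n : ℕ) :
    Continuous (folnerAverage F f n) :=
  (continuous_finsetSum _ fun g _ => hf.comp (continuous_const_smul g)).div_const _

theorem abs_folnerAverage_le [SMul Γ Y] [TopologicalSpace Y] [CompactSpace Y]
    (F : ℕ → Finset Γ) (f : C(Y, ℝ)) (n : ℕ) (x : Y) :
    |folnerAverage F f n x| ≤ ‖f‖ := by
  rw [folnerAverage, abs_div, Nat.abs_cast]
  refine div_le_of_le_mul₀ (Nat.cast_nonneg _) (norm_nonneg f) ?_
  calc |∑ g ∈ F n, f (g • x)| ≤ ∑ g ∈ F n, |f (g • x)| := abs_sum_le_sum_abs _ _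
    _ ≤ ‖f‖ * #(F n) := by
        rw [mul_comm]
        simpa using sum_le_card_nsmul _ _ _ fun g _ => f.norm_coe_le_norm (g • x)

theorem integral_folnerAverage [Group Γ] [DecidableEq Γ] [SMul Γ Y] [TopologicalSpace Y]
    [CompactSpace Y] [ContinuousConstSMul Γ Y] [MeasurableSpace Y] [BorelSpace Y]
    [HasOuterApproxClosed Y] {F : ℕ → Finset Γ} (hF : IsFolner F) {ν : Measure Y}
    [IsFiniteMeasure ν] (hν : ∀ g : Γ, ν.map (g • ·) = ν) (f : C(Y, ℝ)) (n : ℕ) :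
    ∫ x, folnerAverage F f n x ∂ν = ∫ x, f x ∂ν := by
  have hcard : (#(F n) : ℝ) ≠ 0 := by exact_mod_cast (hF.1 n).card_pos.ne'
  have hinv : ∀ g : Γ, ∫ x, f (g • x) ∂ν = ∫ x, f x ∂ν := fun g =>
    (map_eq_self_iff_forall_integral_comp_eq (continuous_const_smul g)).1 (hν g) f
  simp only [folnerAverage]
  rw [integral_div, integral_finsetSum (F n) (f := fun g x => f (g • x))
    fun g _ => (f.continuous.comp (continuous_const_smul g)).integrable_of_compactSpace ν]
  simp only [hinv, sum_const, nsmul_eq_mul]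
  exact mul_div_cancel_left₀ _ hcard

theorem IsGeneric.map_smul_eq [Group Γ] [DecidableEq Γ] [MulAction Γ Y] [TopologicalSpace Y]
    [CompactSpace Y] [ContinuousConstSMul Γ Y] [MeasurableSpace Y] [BorelSpace Y]
    [HasOuterApproxClosed Y] {F : ℕ → Finset Γ} (hF : IsFolner F) {x : Y} {ν : Measure Y}
    [IsFiniteMeasure ν] (hx : IsGeneric F x ν) (g : Γ) : ν.map (g • ·) = ν := by
  refine (map_eq_self_iff_forall_integral_comp_eq (continuous_const_smul g)).2 fun f => ?_
  let fg : C(Y, ℝ) := f.comp ⟨(g • ·), continuous_const_smul g⟩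
  have htranslate : Tendsto (fun n => (∑ h ∈ F n, f ((g * h) • x)) / #(F n)) atTop
      (𝓝 (∫ y, f (g • y) ∂ν)) := by
    simpa [fg, folnerAverage, mul_smul] using hx fg
  have hdiff := hF.tendsto_average_mul_left_sub (φ := fun h => f (h • x))
    (fun h => f.norm_coe_le_norm (h • x)) g
  have hsame : Tendsto (fun n => (∑ h ∈ F n, f ((g * h) • x)) / #(F n)) atTop
      (𝓝 (0 + ∫ y, f y ∂ν)) :=
    (hdiff.add (hx f)).congr fun n => sub_add_cancel _ _
  simpa using tendsto_nhds_unique htranslate hsame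

theorem IsGeneric.ae_mem_closure_orbit [Monoid Γ] [MulAction Γ Y] [PseudoMetricSpace Y]
    [CompactSpace Y] [MeasurableSpace Y] [OpensMeasurableSpace Y] {F : ℕ → Finset Γ} {x : Y}
    {ν : Measure Y} [IsFiniteMeasure ν] (hx : IsGeneric F x ν) :
    ∀ᵐ y ∂ν, y ∈ closure (MulAction.orbit Γ x) := by
  set C := closure (MulAction.orbit Γ x)
  let d : C(Y, ℝ) := ⟨(Metric.infDist · C), Metric.continuous_infDist_pt C⟩
  have hd : ∀ n, folnerAverage F d n x = 0 := fun n => by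
    rw [folnerAverage, sum_eq_zero (f := fun g => d (g • x)) fun g _ =>
      Metric.infDist_zero_of_mem (subset_closure (MulAction.mem_orbit x g)), zero_div]
  have hint : ∫ y, d y ∂ν = 0 :=
    tendsto_nhds_unique (hx d) (by simp only [hd]; exact tendsto_const_nhds)
  have hd_ae := (integral_eq_zero_iff_of_nonneg (fun y => Metric.infDist_nonneg)
    (d.continuous.integrable_of_compactSpace ν)).1 hint
  filter_upwards [hd_ae] with y hy
  exact (isClosed_closure.mem_iff_infDist_zero (MulAction.nonempty_orbit x).closure).2 hy

theorem integral_integral_eq_of_forall_isGeneric [Group Γ] [DecidableEq Γ] [SMul Γ Y]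
    [TopologicalSpace Y] [CompactSpace Y] [ContinuousConstSMul Γ Y] [MeasurableSpace Y]
    [BorelSpace Y] [HasOuterApproxClosed Y] {F : ℕ → Finset Γ} (hF : IsFolner F)
    {μ : Y → Measure Y} (hμ : ∀ y, IsGeneric F y (μ y)) {ν : Measure Y} [IsFiniteMeasure ν]
    (hν : ∀ g : Γ, ν.map (g • ·) = ν) (f : C(Y, ℝ)) :
    ∫ y, ∫ z, f z ∂μ y ∂ν = ∫ y, f y ∂ν := by
  have hlim : Tendsto (fun n => ∫ y, folnerAverage F f n y ∂ν) atTop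
      (𝓝 (∫ y, ∫ z, f z ∂μ y ∂ν)) :=
    tendsto_integral_of_dominated_convergence (fun _ => ‖f‖)
      (fun n => (continuous_folnerAverage F f.continuous n).aestronglyMeasurable)
      (integrable_const _) (fun n => .of_forall fun y => abs_folnerAverage_le F f n y)
      (.of_forall fun y => hμ y f)
  simp only [integral_folnerAverage hF hν] at hlim
  exact tendsto_nhds_unique hlim tendsto_const_nhds

theorem eq_of_map_smul_eq_of_ae_mem_closure_orbit [Group Γ] [DecidableEq Γ] [MulAction Γ Y]
    [TopologicalSpace Y] [CompactSpace Y] [ContinuousConstSMul Γ Y] [MeasurableSpace Y]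
    [BorelSpace Y] [HasOuterApproxClosed Y] {F : ℕ → Finset Γ} (hF : IsFolner F)
    {μ : Y → ProbabilityMeasure Y} (hμ : Continuous μ) (hgen : ∀ y, IsGeneric F y (μ y))
    {x : Y}
    (hS : ∀ (g : Γ) (f : C(Y, ℝ)), ∫ z, f z ∂(μ (g • x) : Measure Y) = ∫ z, f z ∂(μ x : Measure Y))
    {ν : Measure Y} [IsProbabilityMeasure ν] (hν : ∀ g : Γ, ν.map (g • ·) = ν)
    (hνx : ∀ᵐ y ∂ν, y ∈ closure (MulAction.orbit Γ x)) : ν = μ x := by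
  refine ext_of_forall_integral_eq_of_IsFiniteMeasure fun f => ?_
  have hconst : Set.EqOn (fun y => ∫ z, f z ∂(μ y : Measure Y))
      (fun _ => ∫ z, f z ∂(μ x : Measure Y)) (closure (MulAction.orbit Γ x)) := by
    refine Set.EqOn.closure ?_
      ((ProbabilityMeasure.continuous_integral_boundedContinuousFunction f).comp hμ)
      continuous_const
    rintro _ ⟨g, rfl⟩
    exact hS g f.toContinuousMap
  calc ∫ y, f y ∂ν = ∫ y, ∫ z, f z ∂(μ y : Measure Y) ∂ν :=
        (integral_integral_eq_of_forall_isGeneric hF hgen hν f.toContinuousMap).symm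
    _ = ∫ _, ∫ z, f z ∂(μ x : Measure Y) ∂ν := integral_congr_ae (hνx.mono hconst)
    _ = ∫ z, f z ∂(μ x : Measure Y) := by simp

end Generic

/-- Let `S` be the pointwise limit of the Følner averaging operators, `Sf(x) = μ_x(f)`,
where every `x` is `μ_x`-generic along the left Følner sequence `𝓕` and `x ↦ μ_x` is
weak*-continuous.  Then `T_g S = S` for all `g ∈ G` (where `T_g f = f ∘ g`) if and only
if every orbit closure is uniquely ergodic. -/
theorem TgS_eq_S_iff_orbit_closures_uniquely_ergodic
    (hcont : ∀ g : G, Continuous fun x : X => g • x)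
    (F : ℕ → Finset G) (hF : IsFolner F)
    (μ : X → ProbabilityMeasure X) (hμcont : Continuous μ)
    (hgen : ∀ x : X, ∀ f : C(X, ℝ),
      Tendsto (fun n => (∑ g ∈ F n, f (g • x)) / (F n).card)
        atTop (𝓝 (∫ y, f y ∂(μ x : Measure X)))) :
    (∀ g : G, ∀ x : X, ∀ f : C(X, ℝ),
        ∫ y, f y ∂(μ (g • x) : Measure X) = ∫ y, f y ∂(μ x : Measure X)) ↔
      (∀ x : X, ∃! ν : ProbabilityMeasure X,
        (∀ g : G, Measure.map (fun y : X => g • y) (ν : Measure X) = (ν : Measure X)) ∧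
        (ν : Measure X) (closure (MulAction.orbit G x)) = 1) := by
  have : ContinuousConstSMul G X := ⟨hcont⟩
  have hgeneric : ∀ x, IsGeneric F x (μ x) := hgen
  have hinv (x : X) (g : G) : (μ x : Measure X).map (g • ·) = μ x :=
    (hgeneric x).map_smul_eq hF g
  have hsupp (x : X) : (μ x : Measure X) (closure (MulAction.orbit G x)) = 1 := by
    simpa using (ae_mem_iff_measure_eq isClosed_closure.nullMeasurableSet).1
      (hgeneric x).ae_mem_closure_orbit
  constructor
  · intro hS x
    refine ⟨μ x, ⟨hinv x, hsupp x⟩, ?_⟩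
    rintro ν ⟨hν, hνx⟩
    refine ProbabilityMeasure.toMeasure_injective
      (eq_of_map_smul_eq_of_ae_mem_closure_orbit hF hμcont hgeneric (hS · x) hν ?_)
    rwa [ae_mem_iff_measure_eq isClosed_closure.nullMeasurableSet, measure_univ]
  · intro hUE g x f
    have hgx : (μ (g • x) : Measure X) (closure (MulAction.orbit G x)) = 1 := by
      simpa only [MulAction.orbit_smul] using hsupp (g • x)
    rw [(hUE x).unique ⟨hinv (g • x), hgx⟩ ⟨hinv x, hsupp x⟩]

end
end

section
/- For the Lamplighter group G acting on X = (ℤ∪{∞})×{0,1}: if (F_n') is a sequence of finite subsets of G which is right Følner (|F_n' f_b Δ F_n'| / |F_n'| → 0 for all b ∈ ℤ), then lim_n |{σ^a∘f_𝐛 ∈ F_n' : b ∈ 𝐛}| / |F_n'| = 1/2 for every b ∈ ℤ, where the elements of F_n' are written in the normal form σ^a ∘ f_𝐛. -/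
open Filter Topology

noncomputable section

open scoped symmDiff

/-! Every `g ∈ G` commutes with the involution `(s, t) ↦ (s, ¬t)` of `X`, so right
multiplication by `f_b`, which flips the lamp at `b`, negates the predicate
"`g` sends `(b, 1)` into `(ℤ ∪ {∞}) × {0}`". On any finite set `F` the elements satisfying a
predicate that is negated by right multiplication with `f_b` are therefore matched, up to
`|F f_b Δ F|` exceptions, with those that do not, so their proportion differs from `1/2` by
at most `|F f_b Δ F| / (2 |F|)`. -/

section Toggle

open Finset

variable {α : Type*} [DecidableEq α] {φ : α → α} {p : α → Prop} [DecidablePred p]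

theorem Finset.card_filter_le_card_filter_not_add_card_image_symmDiff
    (hφ : Function.Injective φ) {F : Finset α} (hp : ∀ a ∈ F, p (φ a) ↔ ¬ p a) :
    #(F.filter p) ≤ #(F.filter (¬ p ·)) + #(F.image φ ∆ F) := by
  have hsub : (F.filter p).image φ ⊆ F.filter (¬ p ·) ∪ F.image φ ∆ F := by
    simp only [subset_iff, mem_image, mem_filter]
    rintro _ ⟨a, ⟨haF, hpa⟩, rfl⟩
    by_cases hφa : φ a ∈ F
    · exact mem_union_left _ (mem_filter.2 ⟨hφa, by simpa [hp a haF]⟩)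
    · exact mem_union_right _
        (mem_symmDiff.2 (.inl ⟨mem_image_of_mem φ haF, hφa⟩))
  calc #(F.filter p) = #((F.filter p).image φ) := (card_image_of_injective _ hφ).symm
    _ ≤ _ := (card_le_card hsub).trans (card_union_le _ _)

theorem Finset.abs_card_filter_div_card_sub_half_le
    (hφ : Function.Injective φ) {F : Finset α} (hF : F.Nonempty)
    (hp : ∀ a ∈ F, p (φ a) ↔ ¬ p a) :
    |(#(F.filter p) : ℝ) / #F - 1 / 2| ≤ (#(F.image φ ∆ F) : ℝ) / #F / 2 := by
  have hle : (#(F.filter p) : ℝ) ≤ #(F.filter (¬ p ·)) + #(F.image φ ∆ F) := by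
    exact_mod_cast card_filter_le_card_filter_not_add_card_image_symmDiff hφ hp
  have hge : (#(F.filter (¬ p ·)) : ℝ) ≤ #(F.filter p) + #(F.image φ ∆ F) := by
    have := card_filter_le_card_filter_not_add_card_image_symmDiff (p := (¬ p ·)) (F := F) hφ
      (fun a ha => by simp [hp a ha])
    simp only [not_not] at this
    exact_mod_cast this
  have hsum : (#(F.filter p) : ℝ) + #(F.filter (¬ p ·)) = #F := by
    exact_mod_cast card_filter_add_card_filter_not p
  have hpos : (0 : ℝ) < #F := by exact_mod_cast hF.card_pos
  rw [abs_le, ← sub_nonneg, ← sub_nonneg (b := _ - _)]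
  constructor <;>
  · field_simp
    linarith

theorem Filter.Tendsto.card_filter_div_card_half {ι : Type*} {l : Filter ι}
    (hφ : Function.Injective φ) {F : ι → Finset α} (hF : ∀ i, (F i).Nonempty)
    (hp : ∀ i, ∀ a ∈ F i, p (φ a) ↔ ¬ p a)
    (hFolner : Tendsto (fun i => (#((F i).image φ ∆ F i) : ℝ) / #(F i)) l (𝓝 0)) :
    Tendsto (fun i => (#((F i).filter p) : ℝ) / #(F i)) l (𝓝 (1 / 2)) := by
  rw [← tendsto_sub_nhds_zero_iff]
  refine squeeze_zero_norm (fun i => ?_) (by simpa using hFolner.div_const 2)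
  exact (Real.norm_eq_abs _).trans_le (abs_card_filter_div_card_sub_half_le hφ (hF i) (hp i))

end Toggle

theorem lampSigma_zpow_apply_coe (k m : ℤ) (t : Bool) :
    (lampSigma ^ k) ((m : OnePoint ℤ), t) = (((m - k : ℤ) : OnePoint ℤ), t) := by
  induction k using Int.induction_on generalizing m with
  | zero => simp
  | succ k ih =>
    rw [zpow_add_one, Equiv.Perm.mul_apply, show lampSigma ((m : OnePoint ℤ), t) =
      (((m - 1 : ℤ) : OnePoint ℤ), t) from rfl, ih]
    ring_nf
  | pred k ih =>
    rw [zpow_sub_one, Equiv.Perm.mul_apply, show lampSigma⁻¹ ((m : OnePoint ℤ), t) =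
      (((m + 1 : ℤ) : OnePoint ℤ), t) from rfl, ih]
    ring_nf

theorem lampfn_apply_self (b : ℤ) (t : Bool) :
    lampfn b ((b : OnePoint ℤ), t) = ((b : OnePoint ℤ), !t) := by
  classical
  have hF : lampF (((0 : ℤ) : OnePoint ℤ), t) = (((0 : ℤ) : OnePoint ℤ), !t) := by
    cases t <;> simp [lampF]
  simp only [lampfn, Equiv.Perm.mul_apply, lampSigma_zpow_apply_coe, sub_self, hF]
  simp

def lampFlip : Equiv.Perm LampX := (Equiv.refl (OnePoint ℤ)).prodCongr Equiv.boolNot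

theorem lampFlip_apply (x : LampX) : lampFlip x = (x.1, !x.2) := rfl

theorem lampG_le_centralizer_lampFlip : lampG ≤ Subgroup.centralizer {lampFlip} := by
  classical
  rw [lampG, Subgroup.closure_le, Set.insert_subset_iff, Set.singleton_subset_iff]
  simp only [SetLike.mem_coe, Subgroup.mem_centralizer_singleton_iff]
  constructor
  · ext ⟨s, t⟩ : 1
    by_cases hs : s = ((0 : ℤ) : OnePoint ℤ) <;>
      cases t <;> simp [lampF, lampFlip, Equiv.swap_apply_def, hs]
  · rfl

theorem apply_mul_lampfn_self_snd {g : Equiv.Perm LampX} (hg : g ∈ lampG) (b : ℤ) :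
    ((g * lampfn b) ((b : OnePoint ℤ), true)).2 = !(g ((b : OnePoint ℤ), true)).2 := by
  have hcomm := congrArg (· ((b : OnePoint ℤ), true))
    (Subgroup.mem_centralizer_singleton_iff.1 (lampG_le_centralizer_lampFlip hg))
  simp only [Equiv.Perm.mul_apply, lampFlip_apply, Bool.not_true] at hcomm
  rw [Equiv.Perm.mul_apply, lampfn_apply_self, Bool.not_true, hcomm]

/-- `b ∈ 𝐛` for `g = σ^a ∘ f_𝐛` is expressed intrinsically: `g` maps `(b, 1)` into
`(ℤ ∪ {∞}) × {0}`. -/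
theorem lamplighter_right_Folner_half :
    ∀ F : ℕ → Finset (Equiv.Perm LampX),
    haveI : DecidableEq (Equiv.Perm LampX) := Classical.decEq _
    (∀ n, (F n).Nonempty) →
    (∀ n, ∀ g ∈ F n, g ∈ lampG) →
    (∀ b : ℤ, Tendsto
      (fun n => ((((F n).image (· * lampfn b)) ∆ (F n)).card : ℝ) / (F n).card)
      atTop (𝓝 0)) →
    ∀ b : ℤ, Tendsto
      (fun n => (((F n).filter
          (fun g => (g (((b : ℤ) : OnePoint ℤ), true)).2 = false)).card : ℝ) / (F n).card)
      atTop (𝓝 (1/2)) := by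
  classical
  intro F hne hmem hFolner b
  refine (hFolner b).card_filter_div_card_half (mul_left_injective _) hne fun n g hg => ?_
  rw [apply_mul_lampfn_self_snd (hmem n g hg) b]
  cases (g ((b : OnePoint ℤ), true)).2 <;> simp

end
end

section
/- For the Lamplighter group action on X and any right Følner sequence (F_n') in G, the empirical measures μ_n^x = (1/|F_n'|) Σ_{g∈F_n'} δ_{gx} converge weak* to (1/2)δ_{(∞,1)} + (1/2)δ_{(∞,0)} for every x ∈ X other than the two fixed points (∞,1) and (∞,0). -/
/-!
Every `g ∈ G` acts on integer points by `(m, ε) ↦ (m + a g, c_g m xor ε)`. Right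
multiplication by `σ⁻¹` raises `a` by one and right multiplication by `f_m` flips the lamp
read at `(m, ε)`, so right Følner invariance makes each value of `a` have proportion tending
to `0` in `F n`, and each lamp value of `g x` proportion tending to `1/2`. By continuity of `h`
at the two points at infinity, `h (g x)` is close to `h (∞, (g x).2)` unless `a g` lies in a
finite set, which happens with proportion tending to `0`.
-/

open Filter Topology

noncomputable section

open scoped symmDiff

open Finset

section Proportion

variable {α : Type*}

def proportion (F : Finset α) (p : α → Prop) [DecidablePred p] : ℝ := #(F.filter p) / #F

lemma proportion_nonneg (F : Finset α) (p : α → Prop) [DecidablePred p] :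
    0 ≤ proportion F p := by
  unfold proportion; positivity

lemma proportion_le_proportion (F : Finset α) {p q : α → Prop} [DecidablePred p]
    [DecidablePred q] (hpq : ∀ x ∈ F, p x → q x) : proportion F p ≤ proportion F q := by
  unfold proportion
  gcongr ?_ / _
  exact_mod_cast card_le_card (monotone_filter_right F hpq)

lemma proportion_add_proportion_not (F : Finset α) (hF : F.Nonempty) (p : α → Prop)
    [DecidablePred p] : proportion F p + proportion F (fun x => ¬ p x) = 1 := by
  unfold proportion
  rw [← add_div, ← Nat.cast_add, card_filter_add_card_filter_not,
    div_self (Nat.cast_ne_zero.2 hF.card_pos.ne')]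

lemma sum_proportion_eq {β : Type*} [DecidableEq β] (F : Finset α) (s : α → β) (T : Finset β) :
    ∑ t ∈ T, proportion F (s · = t) = proportion F (s · ∈ T) := by
  simp only [proportion, ← sum_div, card_eq_sum_ones, Nat.cast_sum,
    sum_fiberwise_eq_sum_filter]

lemma sum_proportion_le_one {β : Type*} [DecidableEq β] (F : Finset α) (s : α → β)
    (T : Finset β) : ∑ t ∈ T, proportion F (s · = t) ≤ 1 := by
  rw [sum_proportion_eq]
  unfold proportion
  exact div_le_one_of_le₀ (by exact_mod_cast card_filter_le _ _) (Nat.cast_nonneg _)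

lemma sum_div_card_eq_sum_proportion {β : Type*} [Fintype β] [DecidableEq β] (F : Finset α)
    (s : α → β) (u : β → ℝ) :
    (∑ x ∈ F, u (s x)) / #F = ∑ b, proportion F (s · = b) * u b := by
  simp only [proportion, ← sum_fiberwise' F s u, sum_const, nsmul_eq_mul, sum_div]
  refine sum_congr rfl fun b _ => by ring

end Proportion

section Folner

variable {G : Type*} [Group G] [DecidableEq G]

def folnerDefect (F : Finset G) (g : G) : ℝ := #((F.image (· * g)) ∆ F) / #F

lemma proportion_le_add_folnerDefect (F : Finset G) (g : G) {p q : G → Prop} [DecidablePred p]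
    [DecidablePred q] (hpq : ∀ x ∈ F, p x → q (x * g)) :
    proportion F p ≤ proportion F q + folnerDefect F g := by
  have hsub : (F.filter p).image (· * g) ⊆ F.filter q ∪ (F.image (· * g)) ∆ F := by
    simp only [subset_iff, mem_image, mem_filter, mem_union, mem_symmDiff]
    rintro _ ⟨x, ⟨hxF, hpx⟩, rfl⟩
    by_cases hy : x * g ∈ F
    · exact Or.inl ⟨hy, hpq x hxF hpx⟩
    · exact Or.inr (Or.inl ⟨⟨x, hxF, rfl⟩, hy⟩)
  have hcard : #(F.filter p) ≤ #(F.filter q) + #((F.image (· * g)) ∆ F) := by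
    rw [← card_image_of_injective _ (mul_left_injective g)]
    exact (card_le_card hsub).trans (card_union_le _ _)
  unfold proportion folnerDefect
  rw [← add_div]
  gcongr
  exact_mod_cast hcard

variable {F : ℕ → Finset G}

lemma tendsto_proportion_half (hne : ∀ n, (F n).Nonempty) {g₀ : G}
    (hF : Tendsto (fun n => folnerDefect (F n) g₀) atTop (𝓝 0)) {c : G → Bool}
    (hc : ∀ n, ∀ x ∈ F n, c (x * g₀) = !c x) (b : Bool) :
    Tendsto (fun n => proportion (F n) (c · = b)) atTop (𝓝 (1 / 2)) := by
  have hsum : ∀ n, proportion (F n) (c · = b) + proportion (F n) (c · = !b) = 1 := fun n => by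
    simpa only [← Bool.eq_not] using proportion_add_proportion_not (F n) (hne n) (c · = b)
  have hle : ∀ b' n, proportion (F n) (c · = b') ≤ proportion (F n) (c · = !b') +
      folnerDefect (F n) g₀ := fun b' n =>
    proportion_le_add_folnerDefect (F n) g₀ fun x hx hcx => by rw [hc n x hx, hcx]
  have hlim : Tendsto (fun n => 1 / 2 + folnerDefect (F n) g₀ / 2) atTop (𝓝 (1 / 2)) := by
    simpa using tendsto_const_nhds.add (hF.div_const 2)
  have hlim' : Tendsto (fun n => 1 / 2 - folnerDefect (F n) g₀ / 2) atTop (𝓝 (1 / 2)) := by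
    simpa using tendsto_const_nhds.sub (hF.div_const 2)
  refine tendsto_of_tendsto_of_tendsto_of_le_of_le hlim' hlim (fun n => ?_) (fun n => ?_)
  · have := hle (!b) n
    rw [Bool.not_not] at this
    linarith [hsum n]
  · linarith [hsum n, hle b n]

lemma tendsto_proportion_eq_zero {σ : G}
    (hF : ∀ j : ℕ, Tendsto (fun n => folnerDefect (F n) (σ ^ j)) atTop (𝓝 0)) {s : G → ℤ}
    (hs : ∀ n, ∀ x ∈ F n, ∀ j : ℕ, s (x * σ ^ j) = s x + j) (t : ℤ) :
    Tendsto (fun n => proportion (F n) (s · = t)) atTop (𝓝 0) := by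
  have hbound : ∀ N n, N * proportion (F n) (s · = t) ≤
      1 + ∑ j ∈ range N, folnerDefect (F n) (σ ^ j) := fun N n => by
    have hdisj : ∑ j ∈ range N, proportion (F n) (s · = t + j) ≤ 1 := by
      have := sum_proportion_le_one (F n) s ((range N).image fun j : ℕ => t + j)
      rwa [sum_image (by intro i _ j _ h; simpa using h)] at this
    calc N * proportion (F n) (s · = t)
        = ∑ j ∈ range N, proportion (F n) (s · = t) := by simp
      _ ≤ ∑ j ∈ range N, (proportion (F n) (s · = t + j) + folnerDefect (F n) (σ ^ j)) :=
        sum_le_sum fun j _ => proportion_le_add_folnerDefect (F n) _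
          fun x hx hsx => by rw [hs n x hx j, hsx]
      _ ≤ 1 + ∑ j ∈ range N, folnerDefect (F n) (σ ^ j) := by
        rw [sum_add_distrib]; linarith
  refine tendsto_order.2 ⟨fun a ha => Eventually.of_forall fun n =>
    ha.trans_le (proportion_nonneg _ _), fun ε hε => ?_⟩
  obtain ⟨k, hk⟩ := exists_nat_one_div_lt (half_pos hε)
  have hsmall := (tendsto_finsetSum (range (k + 1)) fun j _ => hF j).eventually
    (gt_mem_nhds (a := ε / 2) (by simpa using half_pos hε))
  filter_upwards [hsmall] with n hn
  have hN : (1 : ℝ) ≤ (k + 1 : ℕ) := by simp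
  have hD : 0 ≤ ∑ j ∈ range (k + 1), folnerDefect (F n) (σ ^ j) :=
    sum_nonneg fun j _ => by unfold folnerDefect; positivity
  have := hbound (k + 1) n
  push_cast at this hN
  have hP : proportion (F n) (s · = t) ≤ 1 / (k + 1) +
      (∑ j ∈ range (k + 1), folnerDefect (F n) (σ ^ j)) / (k + 1) := by
    rw [← add_div, le_div_iff₀' (by positivity)]
    exact this
  linarith [div_le_self hD hN]

lemma tendsto_proportion_mem_zero {σ : G}
    (hF : ∀ j : ℕ, Tendsto (fun n => folnerDefect (F n) (σ ^ j)) atTop (𝓝 0)) {s : G → ℤ}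
    (hs : ∀ n, ∀ x ∈ F n, ∀ j : ℕ, s (x * σ ^ j) = s x + j) (T : Finset ℤ) :
    Tendsto (fun n => proportion (F n) (s · ∈ T)) atTop (𝓝 0) := by
  simpa only [sum_proportion_eq, sum_const_zero] using
    tendsto_finsetSum T fun t _ => tendsto_proportion_eq_zero hF hs t

end Folner

lemma tendsto_sum_div_card_of_tendsto_proportion {ι : Type*} {F : ℕ → Finset ι} {e : ι → ℝ}
    {C : ℝ} (hC : ∀ i, |e i| ≤ C)
    (he : ∀ ε > 0, Tendsto (fun n => proportion (F n) (ε < |e ·|)) atTop (𝓝 0)) :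
    Tendsto (fun n => (∑ i ∈ F n, e i) / #(F n)) atTop (𝓝 0) := by
  have hbound : ∀ ε > 0, ∀ n,
      |(∑ i ∈ F n, e i) / #(F n)| ≤ ε + C * proportion (F n) (ε < |e ·|) := fun ε hε n => by
    have hpt : ∀ i, |e i| ≤ ε + C * if ε < |e i| then 1 else 0 := fun i => by
      split_ifs with h
      · linarith [hC i]
      · linarith [not_lt.1 h]
    have hsum : |∑ i ∈ F n, e i| ≤ ε * #(F n) + C * #((F n).filter (ε < |e ·|)) := by
      calc |∑ i ∈ F n, e i| ≤ ∑ i ∈ F n, |e i| := abs_sum_le_sum_abs _ _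
        _ ≤ ∑ i ∈ F n, (ε + C * if ε < |e i| then 1 else 0) := sum_le_sum fun i _ => hpt i
        _ = ε * #(F n) + C * #((F n).filter (ε < |e ·|)) := by
          rw [sum_add_distrib, ← mul_sum, sum_boole]; simp [mul_comm]
    rcases (F n).eq_empty_or_nonempty with hF | hF
    · simp [hF, proportion, hε.le]
    have hpos : (0 : ℝ) < #(F n) := by exact_mod_cast hF.card_pos
    rw [abs_div, Nat.abs_cast, div_le_iff₀ hpos, proportion]
    calc |∑ i ∈ F n, e i| ≤ ε * #(F n) + C * #((F n).filter (ε < |e ·|)) := hsum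
      _ = _ := by field_simp
  rw [tendsto_zero_iff_abs_tendsto_zero]
  refine tendsto_order.2 ⟨fun a ha => Eventually.of_forall fun n => ha.trans_le (abs_nonneg _),
    fun ε hε => ?_⟩
  have hlim : Tendsto (fun n => ε / 2 + C * proportion (F n) (ε / 2 < |e ·|)) atTop
      (𝓝 (ε / 2)) := by
    simpa using tendsto_const_nhds.add ((he (ε / 2) (half_pos hε)).const_mul C)
  filter_upwards [hlim.eventually (gt_mem_nhds (half_lt_self hε))] with n hn
  exact (hbound _ (half_pos hε) n).trans_lt hn

lemma eventually_cofinite_abs_sub_infty_lt {α Y : Type*} [TopologicalSpace α] [DiscreteTopology α]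
    [TopologicalSpace Y] [Finite Y] (h : C(OnePoint α × Y, ℝ)) {ε : ℝ} (hε : 0 < ε) :
    ∀ᶠ a : α in cofinite, ∀ y, |h (↑a, y) - h (OnePoint.infty, y)| < ε := by
  have hcoe : Tendsto ((↑) : α → OnePoint α) cofinite (𝓝 OnePoint.infty) := by
    rw [← cocompact_eq_cofinite, ← coclosedCompact_eq_cocompact]
    exact OnePoint.tendsto_coe_infty
  refine eventually_all.2 fun y => ?_
  have := (h.continuous.tendsto _).comp (hcoe.prodMk_nhds (tendsto_const_nhds (x := y)))
  simpa [Real.dist_eq] using Metric.tendsto_nhds.1 this ε hε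

lemma tendsto_sum_sub_infty_div_card {ι α Y : Type*} [TopologicalSpace α] [DiscreteTopology α]
    [DecidableEq α] [TopologicalSpace Y] [Finite Y] {F : ℕ → Finset ι} {pos : ι → α}
    (hpos : ∀ T : Finset α, Tendsto (fun n => proportion (F n) (pos · ∈ T)) atTop (𝓝 0))
    (bit : ι → Y) (h : C(OnePoint α × Y, ℝ)) :
    Tendsto (fun n => (∑ i ∈ F n, (h (↑(pos i), bit i) - h (OnePoint.infty, bit i))) / #(F n))
      atTop (𝓝 0) := by
  refine tendsto_sum_div_card_of_tendsto_proportion (C := 2 * ‖h‖) (fun i => ?_) fun ε hε => ?_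
  · calc _ ≤ |h (↑(pos i), bit i)| + |h (OnePoint.infty, bit i)| := abs_sub _ _
      _ ≤ 2 * ‖h‖ := by
        have h₁ := h.norm_coe_le_norm (↑(pos i), bit i)
        have h₂ := h.norm_coe_le_norm (OnePoint.infty, bit i)
        rw [Real.norm_eq_abs] at h₁ h₂
        linarith
  · have hfin := eventually_cofinite.1 (eventually_cofinite_abs_sub_infty_lt h hε)
    refine squeeze_zero (fun n => proportion_nonneg _ _) (fun n => proportion_le_proportion _
      fun i _ hi => ?_) (hpos hfin.toFinset)
    rw [Set.Finite.mem_toFinset]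
    exact fun hnear => (hnear (bit i)).not_gt hi

lemma lampSigma_apply (m : ℤ) (ε : Bool) : lampSigma (↑m, ε) = (↑(m - 1), ε) := rfl

lemma lampSigma_zpow_apply_s16 (k m : ℤ) (ε : Bool) :
    (lampSigma ^ k) (↑m, ε) = (↑(m - k), ε) := by
  induction k using Int.induction_on generalizing m with
  | zero => simp
  | succ k ih => rw [zpow_add_one, Equiv.Perm.mul_apply, lampSigma_apply, ih]; ring_nf
  | pred k ih =>
    have : lampSigma⁻¹ (↑m, ε) = (↑(m + 1), ε) := by
      rw [Equiv.Perm.inv_eq_iff_eq, lampSigma_apply, add_sub_cancel_right]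
    rw [zpow_sub_one, Equiv.Perm.mul_apply, this, ih]; ring_nf

lemma lampF_apply (m : ℤ) (ε : Bool) : lampF (↑m, ε) = (↑m, xor (decide (m = 0)) ε) := by
  let : DecidableEq LampX := Classical.decEq _
  rw [lampF, Equiv.swap_apply_def]
  by_cases hm : m = 0
  · subst hm; cases ε <;> simp
  · simp [hm]

lemma lampfn_apply_self_s16 (m : ℤ) (ε : Bool) : lampfn m (↑m, ε) = (↑m, !ε) := by
  rw [lampfn, Equiv.Perm.mul_apply, Equiv.Perm.mul_apply, lampSigma_zpow_apply_s16, sub_self,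
    lampF_apply, lampSigma_zpow_apply_s16, sub_neg_eq_add, zero_add]
  simp

def lampNormalForm : Subgroup (Equiv.Perm LampX) where
  carrier := {g | ∃ a : ℤ, ∃ c : ℤ → Bool, ∀ (m : ℤ) (ε : Bool),
    g (↑m, ε) = (↑(m + a), xor (c m) ε)}
  one_mem' := ⟨0, fun _ => false, by simp⟩
  mul_mem' := by
    rintro g₁ g₂ ⟨a₁, c₁, h₁⟩ ⟨a₂, c₂, h₂⟩
    refine ⟨a₂ + a₁, fun m => xor (c₁ (m + a₂)) (c₂ m), fun m ε => ?_⟩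
    rw [Equiv.Perm.mul_apply, h₂, h₁, Bool.xor_assoc, add_assoc]
  inv_mem' := by
    rintro g ⟨a, c, hg⟩
    refine ⟨-a, fun m => c (m - a), fun m ε => ?_⟩
    rw [Equiv.Perm.inv_eq_iff_eq, hg]
    simp [sub_eq_add_neg]

lemma lampG_le_lampNormalForm : lampG ≤ lampNormalForm := by
  refine (Subgroup.closure_le _).2 ?_
  rintro g (rfl | rfl)
  · exact ⟨0, fun m => decide (m = 0), fun m ε => by rw [lampF_apply, add_zero]⟩
  · exact ⟨-1, fun _ => false, fun m ε => by rw [lampSigma_apply]; simp [sub_eq_add_neg]⟩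

-- The value at `∞` is junk: for `g ∈ lampG` the point `g (0, true)` is never at infinity.
def lampShift (g : Equiv.Perm LampX) : ℤ := (g (↑(0 : ℤ), true)).1.elim 0 id

lemma fst_apply_coe_of_mem_lampG {g : Equiv.Perm LampX} (hg : g ∈ lampG) (m : ℤ) (ε : Bool) :
    (g (↑m, ε)).1 = ↑(m + lampShift g) := by
  obtain ⟨a, c, hac⟩ := lampG_le_lampNormalForm hg
  simp [lampShift, hac]

lemma snd_apply_coe_not_of_mem_lampG {g : Equiv.Perm LampX} (hg : g ∈ lampG) (m : ℤ)
    (ε : Bool) : (g (↑m, !ε)).2 = !(g (↑m, ε)).2 := by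
  obtain ⟨a, c, hac⟩ := lampG_le_lampNormalForm hg
  simp [hac]

lemma lampShift_mul_sigma_inv_pow {g : Equiv.Perm LampX} (hg : g ∈ lampG) (j : ℕ) :
    lampShift (g * lampSigma⁻¹ ^ j) = lampShift g + j := by
  have hσ : (lampSigma⁻¹ ^ j) (↑(0 : ℤ), true) = (↑(j : ℤ), true) := by
    rw [inv_pow, ← zpow_natCast, ← zpow_neg, lampSigma_zpow_apply_s16, sub_neg_eq_add, zero_add]
  rw [lampShift, Equiv.Perm.mul_apply, hσ, fst_apply_coe_of_mem_lampG hg, add_comm]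
  rfl

lemma lampF_mem : lampF ∈ lampG := Subgroup.subset_closure (by simp)

lemma lampSigma_mem : lampSigma ∈ lampG := Subgroup.subset_closure (by simp)

lemma lampfn_mem (m : ℤ) : lampfn m ∈ lampG :=
  mul_mem (mul_mem (zpow_mem lampSigma_mem _) lampF_mem) (zpow_mem lampSigma_mem _)

/-- For the Lamplighter group action on `X = (ℤ∪{∞}) × {0,1}` and any right Følner
sequence `(F_n')` in `G`, the empirical measures `μ_n^x = (1/|F_n'|) Σ_{g∈F_n'} δ_{gx}`
converge weak* to `(1/2)δ_{(∞,1)} + (1/2)δ_{(∞,0)}` for every `x` other than the two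
fixed points `(∞,1)` and `(∞,0)`. -/
theorem lamplighter_right_Folner_averages :
    ∀ F : ℕ → Finset (Equiv.Perm LampX),
    haveI : DecidableEq (Equiv.Perm LampX) := Classical.decEq _
    (∀ n, (F n).Nonempty) →
    (∀ n, ∀ g ∈ F n, g ∈ lampG) →
    (∀ g ∈ lampG, Tendsto
      (fun n => ((((F n).image (· * g)) ∆ (F n)).card : ℝ) / (F n).card)
      atTop (𝓝 0)) →
    ∀ x : LampX, x ≠ (OnePoint.infty, true) → x ≠ (OnePoint.infty, false) →
    ∀ h : C(LampX, ℝ), Tendsto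
      (fun n => (∑ g ∈ F n, h (g x)) / (F n).card)
      atTop (𝓝 ((1/2) * h (OnePoint.infty, true) + (1/2) * h (OnePoint.infty, false))) := by
  intro F hne hmem hFol x hx₁ hx₀ h
  let : DecidableEq (Equiv.Perm LampX) := Classical.decEq _
  obtain ⟨m₀, ε₀, rfl⟩ : ∃ (m₀ : ℤ) (ε₀ : Bool), x = (↑m₀, ε₀) := by
    rcases x with ⟨_ | m₀, _ | _⟩
    exacts [absurd rfl hx₀, absurd rfl hx₁, ⟨m₀, _, rfl⟩, ⟨m₀, _, rfl⟩]
  set bit : Equiv.Perm LampX → Bool := fun g => (g (↑m₀, ε₀)).2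
  have hbit : ∀ b, Tendsto (fun n => proportion (F n) (bit · = b)) atTop (𝓝 (1 / 2)) :=
    tendsto_proportion_half hne (hFol _ (lampfn_mem m₀)) fun n g hg => by
      simp only [bit, Equiv.Perm.mul_apply, lampfn_apply_self_s16,
        snd_apply_coe_not_of_mem_lampG (hmem n g hg)]
  have hpos : ∀ T : Finset ℤ,
      Tendsto (fun n => proportion (F n) (m₀ + lampShift · ∈ T)) atTop (𝓝 0) :=
    tendsto_proportion_mem_zero (σ := lampSigma⁻¹)
      (fun j => hFol _ (pow_mem (inv_mem lampSigma_mem) j))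
      fun n g hg j => by rw [lampShift_mul_sigma_inv_pow (hmem n g hg), add_assoc]
  have hsplit : ∀ n, (∑ g ∈ F n, h (g (↑m₀, ε₀))) / #(F n) =
      ∑ b, proportion (F n) (bit · = b) * h (OnePoint.infty, b) +
      (∑ g ∈ F n, (h (↑(m₀ + lampShift g), bit g) - h (OnePoint.infty, bit g))) / #(F n) := by
    intro n
    rw [← sum_div_card_eq_sum_proportion, ← add_div, ← sum_add_distrib]
    refine congrArg (· / _) (sum_congr rfl fun g hg => ?_)
    rw [← fst_apply_coe_of_mem_lampG (hmem n g hg)]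
    ring
  have := (tendsto_finsetSum univ fun b _ => (hbit b).mul_const (h (OnePoint.infty, b))).add
    (tendsto_sum_sub_infty_div_card hpos bit h)
  simp only [Fintype.sum_bool, add_zero] at this
  exact this.congr fun n => by rw [hsplit, Fintype.sum_bool]

end
end

section
/- Combinatorial construction lemma: Fix n ∈ ℕ and r_{-n}, …, r_n ∈ [0,1]. Define, for k = 1,…,2^{2n}, words v^k ∈ {0,1}^{2n+1} by v^k_ℓ = 1 iff r_ℓ − (k−1)2^{−2n} ∈ (0,1], and let C_n ⊆ {0,1}^{4n+1} consist of the 2^{2n} words w^k_1…w^k_{2n} interleaved with v^k (one for each element w^k of an enumeration of {0,1}^{2n}). Then |C_n| = 2^{2n} and for each ℓ₀ ∈ [−n, n], | |{u ∈ C_n : u_{ℓ₀} = 1}| / |C_n| − r_{ℓ₀} | ≤ 2^{−2n}. -/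
/-! The outer letters of `u^k` spell `w^k`, so `k ↦ u^k` is injective and `|C_n| = 2^{2n}`.
Since `r_ℓ ≤ 1`, the middle letter `v^k_ℓ` is `1` exactly when `k - 1 < r_ℓ 2^{2n}`, so
`⌈r_ℓ 2^{2n}⌉` words have a `1` at `ℓ`, and that ceiling exceeds `r_ℓ 2^{2n}` by less than one. -/

open Filter Topology

noncomputable section

variable (n : ℕ) (r : ℤ → ℝ) (w : Fin (2 ^ (2 * n)) ≃ (Fin (2 * n) → Bool))

/-- The word `v^k ∈ {0,1}^{2n+1}` (indexed by `ℓ ∈ [−n,n]`):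
`v^k_ℓ = 𝟙_{(0,1]}(r_ℓ − (k−1)2^{−2n})`.  (Here `k` runs through `Fin 2^{2n}`, so `k`
plays the role of `k−1 ∈ {0,…,2^{2n}−1}`.) -/
def vWord (k : Fin (2 ^ (2 * n))) (ℓ : ℤ) : Bool :=
  letI := Classical.propDecidable
  if 0 < r ℓ - (k : ℕ) * ((2 : ℝ) ^ (2 * n))⁻¹ ∧
      r ℓ - (k : ℕ) * ((2 : ℝ) ^ (2 * n))⁻¹ ≤ 1 then true else false

/-- The word `u^k ∈ {0,1}^{4n+1}` (indexed by `ℓ ∈ [−2n,2n]`, extended by `false`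
outside) given by `u^k_{-2n}…u^k_{2n} = w^k_1…w^k_n v^k_{-n}…v^k_n w^k_{n+1}…w^k_{2n}`. -/
def uWord (k : Fin (2 ^ (2 * n))) : ℤ → Bool := fun ℓ =>
  if h1 : -(n : ℤ) ≤ ℓ ∧ ℓ ≤ (n : ℤ) then vWord n r k ℓ
  else if h2 : -(2 * n : ℤ) ≤ ℓ ∧ ℓ < -(n : ℤ) then w k ⟨(ℓ + 2 * n).toNat, by omega⟩
  else if h3 : (n : ℤ) < ℓ ∧ ℓ ≤ (2 * n : ℤ) then w k ⟨(ℓ - 1).toNat, by omega⟩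
  else false

/-- The collection `C_n ⊆ {0,1}^{4n+1}` of the `2^{2n}` interleaved words. -/
def Cwords : Finset (ℤ → Bool) :=
  letI := Classical.decEq (ℤ → Bool)
  Finset.image (uWord n r w) Finset.univ

lemma abs_natCeil_mul_div_sub_le {x N : ℝ} (hx : 0 ≤ x) (hN : 0 < N) :
    |(⌈x * N⌉₊ : ℝ) / N - x| ≤ N⁻¹ := by
  have hle : x * N ≤ ⌈x * N⌉₊ := Nat.le_ceil _
  have hlt : (⌈x * N⌉₊ : ℝ) < x * N + 1 := Nat.ceil_lt_add_one (by positivity)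
  have hsplit : (⌈x * N⌉₊ : ℝ) / N - x = (⌈x * N⌉₊ - x * N) * N⁻¹ := by field_simp
  rw [hsplit, abs_of_nonneg (mul_nonneg (by linarith) (inv_nonneg.2 hN.le))]
  calc ((⌈x * N⌉₊ : ℝ) - x * N) * N⁻¹ ≤ 1 * N⁻¹ := by gcongr; linarith
    _ = N⁻¹ := one_mul _

lemma uWord_left (k : Fin (2 ^ (2 * n))) (i : Fin (2 * n)) (hi : (i : ℕ) < n) :
    uWord n r w k ((i : ℤ) - 2 * n) = w k i := by
  unfold uWord
  rw [dif_neg (by omega), dif_pos ⟨by omega, by omega⟩]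
  have hidx : ((i : ℤ) - 2 * n + 2 * n).toNat = i := by omega
  simp only [hidx, Fin.eta]

lemma uWord_right (k : Fin (2 ^ (2 * n))) (i : Fin (2 * n)) (hi : n ≤ (i : ℕ)) :
    uWord n r w k ((i : ℤ) + 1) = w k i := by
  have hi2 : (i : ℕ) < 2 * n := i.isLt
  unfold uWord
  rw [dif_neg (by omega), dif_neg (by omega), dif_pos ⟨by omega, by omega⟩]
  have hidx : ((i : ℤ) + 1 - 1).toNat = i := by omega
  simp only [hidx, Fin.eta]

lemma uWord_of_mem_Icc (k : Fin (2 ^ (2 * n))) {ℓ : ℤ} (h1 : -(n : ℤ) ≤ ℓ) (h2 : ℓ ≤ n) :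
    uWord n r w k ℓ = vWord n r k ℓ :=
  dif_pos ⟨h1, h2⟩

lemma uWord_injective : Function.Injective (uWord n r w) := by
  intro k k' h
  apply w.injective
  funext i
  rcases lt_or_ge (i : ℕ) n with hi | hi
  · rw [← uWord_left n r w k i hi, ← uWord_left n r w k' i hi, h]
  · rw [← uWord_right n r w k i hi, ← uWord_right n r w k' i hi, h]

lemma card_Cwords : (Cwords n r w).card = 2 ^ (2 * n) := by
  classical
  rw [Cwords, Finset.card_image_of_injective _ (uWord_injective n r w)]
  simp

lemma vWord_eq_true_iff (k : Fin (2 ^ (2 * n))) {ℓ : ℤ} (hr : r ℓ ≤ 1) :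
    vWord n r k ℓ = true ↔ (k : ℕ) < ⌈r ℓ * 2 ^ (2 * n)⌉₊ := by
  have hk : (0 : ℝ) ≤ (k : ℕ) * ((2 : ℝ) ^ (2 * n))⁻¹ := by positivity
  rw [Nat.lt_ceil, ← div_lt_iff₀ (by positivity), div_eq_mul_inv, ← sub_pos, vWord]
  split_ifs with h
  · exact iff_of_true rfl h.1
  · exact iff_of_false (by simp) fun hpos => h ⟨hpos, by linarith⟩

lemma card_filter_Cwords_eq_true {ℓ₀ : ℤ} (h1 : -(n : ℤ) ≤ ℓ₀) (h2 : ℓ₀ ≤ n) (hr : r ℓ₀ ≤ 1)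
    [DecidablePred fun u : ℤ → Bool => u ℓ₀ = true] :
    ((Cwords n r w).filter (fun u => u ℓ₀ = true)).card = ⌈r ℓ₀ * 2 ^ (2 * n)⌉₊ := by
  classical
  have hceil : ⌈r ℓ₀ * 2 ^ (2 * n)⌉₊ ≤ 2 ^ (2 * n) :=
    Nat.ceil_le.2 (by push_cast; exact mul_le_of_le_one_left (by positivity) hr)
  rw [Cwords, Finset.filter_image, Finset.card_image_of_injective _ (uWord_injective n r w)]
  simp only [uWord_of_mem_Icc n r w _ h1 h2, vWord_eq_true_iff n r _ hr]
  rw [Fin.card_filter_val_lt, min_eq_right hceil]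

/-- Combinatorial construction lemma: `|C_n| = 2^{2n}`, and for each `ℓ₀ ∈ [−n,n]` the
proportion of words in `C_n` whose `ℓ₀`-th entry is `1` differs from `r_{ℓ₀}` by at most
`2^{−2n}`. -/
theorem Cwords_card_and_ratio (hr : ∀ ℓ, r ℓ ∈ Set.Icc (0 : ℝ) 1) :
    letI := Classical.propDecidable
    (Cwords n r w).card = 2 ^ (2 * n) ∧
    ∀ ℓ₀ : ℤ, -(n : ℤ) ≤ ℓ₀ → ℓ₀ ≤ (n : ℤ) →
      |(((Cwords n r w).filter (fun u => u ℓ₀ = true)).card : ℝ) / ((Cwords n r w).card : ℝ)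
        - r ℓ₀| ≤ ((2 : ℝ) ^ (2 * n))⁻¹ := by
  refine ⟨card_Cwords n r w, fun ℓ₀ h1 h2 => ?_⟩
  rw [@card_filter_Cwords_eq_true n r w ℓ₀ h1 h2 (hr ℓ₀).2 (fun _ => Classical.propDecidable _),
    card_Cwords]
  push_cast
  exact abs_natCeil_mul_div_sub_le (hr ℓ₀).1 (by positivity)

end
end
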